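/- Let X, L, S and Ẋ be real 3×3 matrices with X invertible, X·S = S·X, and let η ≠ 0. Define the continuum spin W := (1/2)·(L − Lᵀ), the strain rate D := (1/2)·(L + Lᵀ) and the elastic strain rate D_e := D − (1/(2η))·S. If the Zaremba–Jaumann evolution equation Ẋ + X·W − W·X = D_e·X + X·D_e holds, then (Ẋ − L·X − X·Lᵀ)·X⁻¹ = −(1/η)·S. Hence the additive (Zaremba–Jaumann rate) formulation of the Maxwell fluid is equivalent to the Lie-derivative flow rule −𝓛ᵥ(X)·X⁻¹ = (1/η)·S of Simo and Miehe. -/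
import Mathlib


open Matrix

abbrev Mat := Matrix (Fin 3) (Fin 3) ℝ

/-- the Zaremba–Jaumann additive formulation implies the Lie-derivative
flow rule of Simo and Miehe: if `Ẋ + X·W − W·X = D_e·X + X·D_e` with
`W = (1/2)(L − Lᵀ)`, `D_e = (1/2)(L + Lᵀ) − (1/(2η))·S` and `X·S = S·X`, then
`(Ẋ − L·X − X·Lᵀ)·X⁻¹ = −(1/η)·S`. -/
theorem zaremba_jaumann_to_lie (X L S Xdot : Mat) (hX : IsUnit X) (hcomm : X * S = S * X)
    (η : ℝ) (hη : η ≠ 0)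
    (heq : Xdot + X * ((1 / 2 : ℝ) • (L - Lᵀ)) - ((1 / 2 : ℝ) • (L - Lᵀ)) * X =
      ((1 / 2 : ℝ) • (L + Lᵀ) - (1 / (2 * η)) • S) * X +
        X * ((1 / 2 : ℝ) • (L + Lᵀ) - (1 / (2 * η)) • S)) :
    (Xdot - L * X - X * Lᵀ) * X⁻¹ = -((1 / η) • S) := by
  have hXdot : Xdot =
      (((1 / 2 : ℝ) • (L + Lᵀ) - (1 / (2 * η)) • S) * X +
        X * ((1 / 2 : ℝ) • (L + Lᵀ) - (1 / (2 * η)) • S)) +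
        ((1 / 2 : ℝ) • (L - Lᵀ)) * X - X * ((1 / 2 : ℝ) • (L - Lᵀ)) := by
    rw [← heq]; abel
  have key : Xdot - L * X - X * Lᵀ = -((1 / η) • S) * X := by
    rw [hXdot]
    simp only [smul_add, smul_sub, Matrix.smul_mul, Matrix.mul_smul, sub_mul, add_mul,
      mul_sub, mul_add, neg_smul, Matrix.neg_mul]
    rw [hcomm]
    module
  rw [key]
  have hdet : IsUnit X.det := (Matrix.isUnit_iff_isUnit_det X).mp hX
  rw [Matrix.mul_assoc, Matrix.mul_nonsing_inv X hdet, Matrix.mul_one]
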